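/- Let R be a commutative Noetherian ring, I and J ideals of R, M an R-module, and i a non-negative integer. Then Supp(H^i_{I,J}(M)) ⊆ Supp(M) ∩ W(I,J). -/

import Mathlib

open CategoryTheory

/-- The `(I,J)`-torsion submodule `Γ_{I,J}(M) = {x ∈ M : Iⁿ x ⊆ J x for n ≫ 1}`;
note that `Iⁿ x ⊆ J x` is equivalent to `Iⁿ ≤ J + ann_R(x)`. -/
def pairTorsion {R : Type} [CommRing R] (I J : Ideal R) (M : Type) [AddCommGroup M]
    [Module R M] : Submodule R M where
  carrier := {x | ∃ n : ℕ, I ^ n ≤ J + Ideal.torsionOf R M x}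
  zero_mem' := ⟨0, by simp [Ideal.torsionOf_zero]⟩
  add_mem' := by
    rintro x y ⟨n, hn⟩ ⟨m, hm⟩
    refine ⟨n + m, ?_⟩
    rw [pow_add]
    refine le_trans (Ideal.mul_mono hn hm) (Ideal.mul_le.mpr fun r hr s hs => ?_)
    rw [Submodule.add_eq_sup, Submodule.mem_sup] at hr hs ⊢
    obtain ⟨j1, hj1, a, ha, rfl⟩ := hr
    obtain ⟨j2, hj2, b, hb, rfl⟩ := hs
    refine ⟨j1 * (j2 + b) + a * j2, ?_, a * b, ?_, by ring⟩
    · exact Ideal.add_mem _ (Ideal.mul_mem_right _ _ hj1) (Ideal.mul_mem_left _ _ hj2)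
    · rw [Ideal.mem_torsionOf_iff] at ha hb ⊢
      have h1 : (a * b) • x = 0 := by rw [mul_comm, mul_smul, ha, smul_zero]
      have h2 : (a * b) • y = 0 := by rw [mul_smul, hb, smul_zero]
      rw [smul_add, h1, h2, add_zero]
  smul_mem' := by
    rintro c x ⟨n, hn⟩
    refine ⟨n, le_trans hn (sup_le_sup_left ?_ _)⟩
    intro r hr
    rw [Ideal.mem_torsionOf_iff] at hr ⊢
    rw [smul_comm, hr, smul_zero]

/-- The `(I,J)`-torsion functor `Γ_{I,J}` on the category of `R`-modules. -/
def pairGamma {R : Type} [CommRing R] (I J : Ideal R) : ModuleCat R ⥤ ModuleCat R where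
  obj M := ModuleCat.of R (pairTorsion I J M)
  map {M N} f := ModuleCat.ofHom (LinearMap.restrict f.hom (fun x hx => by
    obtain ⟨n, hn⟩ := hx
    exact ⟨n, le_trans hn (sup_le_sup_left (fun r hr => by
      rw [Ideal.mem_torsionOf_iff] at hr ⊢
      rw [← map_smul, hr, map_zero]) _)⟩))
  map_id _ := by ext; rfl
  map_comp _ _ := by ext; rfl

instance {R : Type} [CommRing R] (I J : Ideal R) : (pairGamma I J).Additive where
  map_add := by intros; ext; rfl

/-- The local cohomology functor `H^i_{I,J}` with respect to the pair of ideals `(I,J)`: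
the `i`-th right derived functor of `Γ_{I,J}`.  Ordinary local cohomology `H^i_I` is the
case `J = ⊥`. -/
noncomputable def pairLocalCohomology {R : Type} [CommRing R] (I J : Ideal R) (i : ℕ) :
    ModuleCat R ⥤ ModuleCat R :=
  (pairGamma I J).rightDerived i

/-- The cohomological dimension `cd(I,J,M) = sup{i : H^i_{I,J}(M) ≠ 0}` (with `sup ∅ = ⊥`). -/
noncomputable def pairCohomologicalDim {R : Type} [CommRing R] (I J : Ideal R)
    (M : ModuleCat R) : WithBot ℕ∞ :=
  sSup {d : WithBot ℕ∞ | ∃ i : ℕ, d = (i : ℕ∞) ∧ Nontrivial ((pairLocalCohomology I J i).obj M)}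

/-- The set of attached prime ideals of an `R`-module `M`: a prime `p` is attached to `M`
if `p = Ann_R(M/N)` for some submodule `N` of `M`. -/
def attachedPrimes (R M : Type) [CommRing R] [AddCommGroup M] [Module R M] : Set (Ideal R) :=
  {p | p.IsPrime ∧ ∃ N : Submodule R M, p = Module.annihilator R (M ⧸ N)}

/-- A module is secondary if it is nonzero and every `r : R` acts on it either surjectively
or nilpotently. -/
def IsSecondary (R M : Type) [CommRing R] [AddCommGroup M] [Module R M] : Prop :=
  Nontrivial M ∧ ∀ r : R, Function.Surjective (fun m : M => r • m) ∨ ∃ n : ℕ, ∀ m : M, r ^ n • m = 0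

/-- A module is representable if it admits a secondary representation, i.e. it is a finite
sum of secondary submodules. -/
def IsRepresentable (R M : Type) [CommRing R] [AddCommGroup M] [Module R M] : Prop :=
  ∃ s : Finset (Submodule R M), (∀ N ∈ s, IsSecondary R N) ∧ s.sup id = ⊤

/-- The (Krull) dimension of a module, `dim M = dim (R / Ann_R M)`. -/
noncomputable def moduleDim (R M : Type) [CommRing R] [AddCommGroup M] [Module R M] :
    WithBot ℕ∞ :=
  ringKrullDim (R ⧸ Module.annihilator R M)

/-- A submodule is essential if it meets every nonzero submodule nontrivially. -/
def IsEssentialSubmodule {R E : Type} [CommRing R] [AddCommGroup E] [Module R E]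
    (N : Submodule R E) : Prop :=
  ∀ P : Submodule R E, P ≠ ⊥ → N ⊓ P ≠ ⊥

/-- `E` is an injective hull of `K` over `R`: `E` is an injective `R`-module containing a
copy of `K` as an essential submodule.  The Matlis dual of an `R`-module `X` (for local `R`
with residue field `K`) is then `D_R(X) = Hom_R(X, E)`. -/
def IsInjectiveHullOf (R K E : Type) [CommRing R] [AddCommGroup K] [Module R K]
    [AddCommGroup E] [Module R E] : Prop :=
  Module.Injective R E ∧
    ∃ f : K →ₗ[R] E, Function.Injective f ∧ IsEssentialSubmodule (LinearMap.range f)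

/-- `W(I,J)`: the set of prime ideals `p` with `Iⁿ ⊆ p + J` for some `n ≥ 1`. -/
def pairW {R : Type} [CommRing R] (I J : Ideal R) : Set (Ideal R) :=
  {p | p.IsPrime ∧ ∃ n : ℕ, 1 ≤ n ∧ I ^ n ≤ p + J}

/-- `W̃(I,J)`: the set of ideals `a` with `Iⁿ ⊆ a + J` for some `n ≥ 1`. -/
def pairWtilde {R : Type} [CommRing R] (I J : Ideal R) : Set (Ideal R) :=
  {a | ∃ n : ℕ, 1 ≤ n ∧ I ^ n ≤ a + J}

/-!
`H^i_{I,J}(M)` is a subquotient of `Γ_{I,J}(E^i)` for any injective resolution `E^•` of `M`, and a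
condition of the form "the annihilator of every element lies in the upward closed set `Q` of
ideals" passes to submodules and quotients. Every element of `Γ_{I,J}(E)` has its annihilator in
`W̃(I,J)`, which gives `Supp H^i_{I,J}(M) ⊆ W(I,J)`.

If `p ∉ Supp M`, then `M` is `S`-torsion for `S = R ∖ p`. Over a Noetherian ring the `S`-torsion
submodule of an injective module is injective (Baer's criterion, plus the stabilization of the
annihilators of `sⁿ x`), so `M` has an injective resolution by `S`-torsion modules, and
`H^i_{I,J}(M)` is `S`-torsion as well, i.e. `p ∉ Supp H^i_{I,J}(M)`.
-/

universe u

open Limits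

section Torsion

open Submodule

variable {R : Type u} [CommRing R]

lemma Ideal.torsionOf_le_torsionOf_apply {M N : Type*} [AddCommGroup M] [Module R M]
    [AddCommGroup N] [Module R N] (f : M →ₗ[R] N) (x : M) :
    Ideal.torsionOf R M x ≤ Ideal.torsionOf R N (f x) := fun r hr => by
  rw [Ideal.mem_torsionOf_iff] at hr ⊢
  rw [← map_smul, hr, map_zero]

lemma Ideal.torsionOf_apply_eq_of_injective {M N : Type*} [AddCommGroup M] [Module R M]
    [AddCommGroup N] [Module R N] {f : M →ₗ[R] N} (hf : Function.Injective f) (x : M) :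
    Ideal.torsionOf R N (f x) = Ideal.torsionOf R M x := by
  ext r
  rw [Ideal.mem_torsionOf_iff, Ideal.mem_torsionOf_iff, ← map_smul, ← map_zero f, hf.eq_iff]

lemma Submodule.FG.exists_mem_annihilator_of_le_torsion' {M : Type*} [AddCommGroup M]
    [Module R M] (S : Submonoid R) {N : Submodule R M} (hN : N.FG) (hNS : N ≤ torsion' R M S) :
    ∃ s ∈ S, s ∈ N.annihilator := by
  induction N, hN using Submodule.fg_induction with
  | singleton x =>
    obtain ⟨⟨s, hs⟩, hsx⟩ := hNS (mem_span_singleton_self x)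
    refine ⟨s, hs, ?_⟩
    rwa [Ideal.annihilator_span_singleton_eq_torsionOf, Ideal.mem_torsionOf_iff]
  | sup N₁ N₂ _ _ ih₁ ih₂ =>
    obtain ⟨s₁, hs₁, h₁⟩ := ih₁ (le_sup_left.trans hNS)
    obtain ⟨s₂, hs₂, h₂⟩ := ih₂ (le_sup_right.trans hNS)
    refine ⟨s₁ * s₂, S.mul_mem hs₁ hs₂, ?_⟩
    rw [annihilator_sup]
    exact ⟨Ideal.mul_mem_right _ _ h₁, Ideal.mul_mem_left _ _ h₂⟩

lemma Module.Injective.exists_linearMap_apply_eq {M Q : Type u} [AddCommGroup M] [Module R M]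
    [AddCommGroup Q] [Module R Q] [Module.Injective R Q]
    {z : M} {w : Q} (h : Ideal.torsionOf R M z ≤ Ideal.torsionOf R Q w) :
    ∃ ψ : M →ₗ[R] Q, ψ z = w := by
  let ι := (R ∙ z).subtype ∘ₗ (Ideal.quotTorsionOfEquivSpanSingleton R M z).toLinearMap
  have hι : Function.Injective ι := (R ∙ z).injective_subtype.comp (LinearEquiv.injective _)
  obtain ⟨ψ, hψ⟩ := Module.Injective.out ι hι
    ((Ideal.torsionOf R M z).liftQ (LinearMap.toSpanSingleton R Q w) fun r hr =>
      LinearMap.mem_ker.mpr ((Ideal.mem_torsionOf_iff w r).mp (h hr)))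
  refine ⟨ψ, ?_⟩
  simpa only [ι, LinearMap.comp_apply, LinearEquiv.coe_coe, one_smul, liftQ_apply,
    Ideal.quotTorsionOfEquivSpanSingleton_apply_mk, LinearMap.toSpanSingleton_apply,
    subtype_apply] using hψ (Submodule.Quotient.mk 1)

/-- Take `k` past the point where the annihilators of `sⁿ x` stabilize: then `s²ᵏ x ↦ sᵏ x`
extends to `ψ : E →ₗ E`, and `t = x - ψ (sᵏ x)` works. -/
lemma Module.Injective.exists_pow_smul_eq_zero_and_smul_eq [IsNoetherianRing R]
    {E : Type u} [AddCommGroup E] [Module R E] [Module.Injective R E]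
    {x : E} {s : R} {a : Ideal R} (ha : a ≤ Ideal.torsionOf R E (s • x)) :
    ∃ (k : ℕ) (t : E), s ^ k • t = 0 ∧ ∀ y ∈ a, y • t = y • x := by
  have hmono : Monotone fun n => Ideal.torsionOf R E (s ^ n • x) := by
    intro n m hnm
    have := Ideal.torsionOf_le_torsionOf_apply (LinearMap.lsmul R E (s ^ (m - n))) (s ^ n • x)
    rwa [LinearMap.lsmul_apply, smul_smul, ← pow_add, Nat.sub_add_cancel hnm] at this
  obtain ⟨n, hn⟩ := monotone_stabilizes_iff_noetherian.mpr inferInstance ⟨_, hmono⟩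
  have hstable : Ideal.torsionOf R E (s ^ (n + 1) • s ^ (n + 1) • x) ≤
      Ideal.torsionOf R E (s ^ (n + 1) • x) := by
    rw [smul_smul, ← pow_add]
    exact ((hn _ (by omega)).symm.trans (hn _ (by omega))).le
  obtain ⟨ψ, hψ⟩ := Module.Injective.exists_linearMap_apply_eq hstable
  refine ⟨n + 1, x - ψ (s ^ (n + 1) • x), ?_, fun y hy => ?_⟩
  · rw [smul_sub, ← map_smul, hψ, sub_self]
  · have hy : y • s ^ (n + 1) • x = 0 := by
      rw [pow_succ, mul_smul, smul_comm y, (Ideal.mem_torsionOf_iff _ _).mp (ha hy), smul_zero]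
    rw [smul_sub, ← map_smul, hy, map_zero, sub_zero]

theorem Module.Injective.torsion' [IsNoetherianRing R] {E : Type u} [AddCommGroup E] [Module R E]
    [Module.Injective R E] (S : Submonoid R) :
    Module.Injective R (Submodule.torsion' R E S) := by
  refine Module.Baer.injective fun a f => ?_
  obtain ⟨g, hg⟩ :=
    Module.Baer.of_injective inferInstance a ((Submodule.torsion' R E S).subtype ∘ₗ f)
  have hag : ∀ y (hy : y ∈ a), y • g 1 = f ⟨y, hy⟩ := fun y hy => by
    rw [← map_smul, smul_eq_mul, mul_one, hg y hy]
    rfl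
  obtain ⟨s, hs, hsa⟩ : ∃ s ∈ S, a ≤ Ideal.torsionOf R E (s • g 1) := by
    have hfg := (IsNoetherian.noetherian a).map (LinearMap.toSpanSingleton R E (g 1))
    obtain ⟨s, hs, hann⟩ := hfg.exists_mem_annihilator_of_le_torsion' S (by
      rintro _ ⟨y, hy, rfl⟩
      rw [LinearMap.toSpanSingleton_apply, hag y hy]
      exact (f ⟨y, hy⟩).2)
    refine ⟨s, hs, fun y hy => ?_⟩
    rw [Ideal.mem_torsionOf_iff, smul_comm]
    exact Submodule.mem_annihilator.mp hann _ ⟨y, hy, rfl⟩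
  obtain ⟨k, t, htk, hta⟩ := Module.Injective.exists_pow_smul_eq_zero_and_smul_eq hsa
  have ht : t ∈ Submodule.torsion' R E S := ⟨⟨s ^ k, S.pow_mem hs k⟩, htk⟩
  refine ⟨LinearMap.toSpanSingleton R _ ⟨t, ht⟩, fun y hy => ?_⟩
  ext
  simp [hta y hy, hag y hy]

end Torsion

lemma CategoryTheory.ShortComplex.exact_cokernel_π_comp_mono {C : Type*} [Category C]
    [Abelian C] {X Y Z : C} (f : X ⟶ Y) (m : cokernel f ⟶ Z) [Mono m] :
    (ShortComplex.mk f (cokernel.π f ≫ m) (by simp)).Exact := by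
  let α : ShortComplex.mk f (cokernel.π f) (by simp) ⟶
      ShortComplex.mk f (cokernel.π f ≫ m) (by simp) :=
    { τ₁ := 𝟙 _
      τ₂ := 𝟙 _
      τ₃ := m }
  rw [← ShortComplex.exact_iff_of_epi_of_isIso_of_mono α]
  exact ShortComplex.exact_cokernel f

namespace CategoryTheory.ObjectProperty

section Resolution

variable {C : Type*} [Category C] [Abelian C] {P : ObjectProperty C} [P.IsClosedUnderQuotients]
  (ip : ∀ X, P X → InjectivePresentation X) (hip : ∀ X hX, P (ip X hX).J) {X : C} (hX : P X)

/-- `resolutionStep n` is the map `Iⁿ⁻¹ ⟶ Iⁿ` (with `I⁻¹ = X`), where `Iⁿ` is the chosen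
presentation of the cokernel of the previous map. -/
noncomputable def resolutionStep : ℕ → Σ' (A B : C) (_ : A ⟶ B), P B
  | 0 => ⟨X, (ip X hX).J, (ip X hX).f, hip X hX⟩
  | n + 1 =>
    let d := (resolutionStep n).2.2.1
    let hQ := P.prop_of_epi (cokernel.π d) (resolutionStep n).2.2.2
    ⟨(resolutionStep n).2.1, (ip _ hQ).J, cokernel.π d ≫ (ip _ hQ).f, hip _ hQ⟩

lemma resolutionStep_comp (n : ℕ) :
    (resolutionStep ip hip hX n).2.2.1 ≫ (resolutionStep ip hip hX (n + 1)).2.2.1 = 0 :=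
  (cokernel.condition_assoc _ _).trans zero_comp

lemma exact_resolutionStep (n : ℕ) : (ShortComplex.mk (resolutionStep ip hip hX n).2.2.1
    (resolutionStep ip hip hX (n + 1)).2.2.1 (resolutionStep_comp ip hip hX n)).Exact :=
  ShortComplex.exact_cokernel_π_comp_mono (m := (ip _ _).f) _

noncomputable def resolutionCocomplex : CochainComplex C ℕ :=
  CochainComplex.of (fun n => (resolutionStep ip hip hX n).2.1)
    (fun n => (resolutionStep ip hip hX (n + 1)).2.2.1) fun n =>
      resolutionStep_comp ip hip hX (n + 1)

lemma resolutionCocomplex_d (n : ℕ) : (resolutionCocomplex ip hip hX).d n (n + 1) =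
    (resolutionStep ip hip hX (n + 1)).2.2.1 :=
  CochainComplex.of_d (fun n => (resolutionStep ip hip hX n).2.1)
    (fun n => (resolutionStep ip hip hX (n + 1)).2.2.1) n

lemma prop_resolutionCocomplex_X (n : ℕ) : P ((resolutionCocomplex ip hip hX).X n) :=
  (resolutionStep ip hip hX n).2.2.2

instance (n : ℕ) : Injective ((resolutionCocomplex ip hip hX).X n) := by
  cases n <;> exact (ip _ _).injective

lemma resolutionCocomplex_exactAt_succ (n : ℕ) :
    (resolutionCocomplex ip hip hX).ExactAt (n + 1) := by
  rw [HomologicalComplex.exactAt_iff' _ n (n + 1) (n + 1 + 1) (by simp) (by simp)]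
  simp only [HomologicalComplex.sc', HomologicalComplex.shortComplexFunctor',
    resolutionCocomplex_d]
  exact exact_resolutionStep ip hip hX (n + 1)

/-- Written out by hand (rather than through `CochainComplex.fromSingle₀Equiv`) so that its
degree-zero component is `(ip X hX).f` on the nose. -/
noncomputable def injectiveResolutionι :
    (CochainComplex.single₀ C).obj X ⟶ resolutionCocomplex ip hip hX where
  f
    | 0 => (ip X hX).f
    | _ + 1 => 0
  comm' := by
    rintro i _ rfl
    cases i with
    | zero =>
      rw [HomologicalComplex.single_obj_d, zero_comp, resolutionCocomplex_d]
      exact resolutionStep_comp ip hip hX 0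
    | succ i => rw [HomologicalComplex.single_obj_d, zero_comp, zero_comp]

noncomputable def injectiveResolution : InjectiveResolution X where
  cocomplex := resolutionCocomplex ip hip hX
  ι := injectiveResolutionι ip hip hX
  quasiIso := ⟨fun n => by
    cases n with
    | zero =>
      rw [CochainComplex.quasiIsoAt₀_iff, ShortComplex.quasiIso_iff_of_zeros]
      · refine (ShortComplex.exact_and_mono_f_iff_of_iso ?_).2
          ⟨exact_resolutionStep ip hip hX 0, (ip X hX).mono⟩
        exact ShortComplex.isoMk (Iso.refl _) (Iso.refl _) (Iso.refl _)
          ((Category.id_comp _).trans (Category.comp_id _).symm)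
          ((Category.id_comp _).trans
            ((resolutionCocomplex_d ip hip hX 0).symm.trans (Category.comp_id _).symm))
      all_goals rfl
    | succ n =>
      rw [quasiIsoAt_iff_exactAt _ _ (CochainComplex.exactAt_succ_single_obj _ _)]
      exact resolutionCocomplex_exactAt_succ ip hip hX n⟩

theorem exists_injectiveResolution
    (h : ∀ X, P X → ∃ ip : InjectivePresentation X, P ip.J) {X : C} (hX : P X) :
    ∃ I : InjectiveResolution X, ∀ n, P (I.cocomplex.X n) := by
  choose ip hip using h
  exact ⟨injectiveResolution ip hip hX, prop_resolutionCocomplex_X ip hip hX⟩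

end Resolution

variable {C : Type*} [Category C] [Abelian C] (P : ObjectProperty C)
  [P.IsClosedUnderSubobjects] [P.IsClosedUnderQuotients]

lemma prop_homology {ι : Type*} {c : ComplexShape ι} (K : HomologicalComplex C c) (i : ι)
    (h : P (K.X i)) : P (K.homology i) :=
  P.prop_of_epi (K.homologyπ i) (P.prop_of_mono (K.iCycles i) h)

lemma prop_rightDerived_obj {D : Type*} [Category D] [Abelian D] [HasInjectiveResolutions D]
    (F : D ⥤ C) [F.Additive] {X : D} (I : InjectiveResolution X)
    (h : ∀ n, P (F.obj (I.cocomplex.X n))) (n : ℕ) : P ((F.rightDerived n).obj X) :=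
  P.prop_of_iso (I.isoRightDerivedObj F n).symm
    (P.prop_homology ((F.mapHomologicalComplex _).obj I.cocomplex) n (h n))

end CategoryTheory.ObjectProperty

/-- `ModuleCat.annihilatorsIn S.idealsMeeting` is the class of `S`-torsion modules. -/
def Submonoid.idealsMeeting {R : Type*} [CommRing R] (S : Submonoid R) : UpperSet (Ideal R) where
  carrier := {a | ∃ s ∈ S, s ∈ a}
  upper' _ _ hab := fun ⟨s, hs, hsa⟩ => ⟨s, hs, hab hsa⟩

def upperPairWtilde {R : Type} [CommRing R] (I J : Ideal R) : UpperSet (Ideal R) where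
  carrier := pairWtilde I J
  upper' _ _ hab := fun ⟨n, hn, h⟩ => ⟨n, hn, h.trans (sup_le_sup_right hab J)⟩

namespace ModuleCat

variable {R : Type u} [CommRing R]

def annihilatorsIn (Q : UpperSet (Ideal R)) : ObjectProperty (ModuleCat.{u} R) :=
  fun X => ∀ x : X, Ideal.torsionOf R X x ∈ Q

variable {Q : UpperSet (Ideal R)}

instance : (annihilatorsIn Q).IsClosedUnderSubobjects where
  prop_of_mono f _ hY x := by
    rw [← Ideal.torsionOf_apply_eq_of_injective ((mono_iff_injective f).mp ‹_›)]
    exact hY (f x)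

instance : (annihilatorsIn Q).IsClosedUnderQuotients where
  prop_of_epi f _ hX y := by
    obtain ⟨x, rfl⟩ := (epi_iff_surjective f).mp ‹_› y
    exact Q.upper (Ideal.torsionOf_le_torsionOf_apply f.hom x) (hX x)

lemma mem_of_mem_support {X : ModuleCat R} (hX : annihilatorsIn Q X) {p : PrimeSpectrum R}
    (hp : p ∈ Module.support R X) : p.asIdeal ∈ Q := by
  obtain ⟨x, hx⟩ := Module.mem_support_iff_exists_annihilator.mp hp
  rw [Ideal.annihilator_span_singleton_eq_torsionOf] at hx
  exact Q.upper hx (hX x)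

lemma annihilatorsIn_primeCompl_of_notMem_support {X : ModuleCat R} {p : PrimeSpectrum R}
    (hp : p ∉ Module.support R X) : annihilatorsIn p.asIdeal.primeCompl.idealsMeeting X := by
  intro x
  obtain ⟨r, hr, hrx⟩ := Module.notMem_support_iff'.mp hp x
  exact ⟨r, hr, (Ideal.mem_torsionOf_iff x r).mpr hrx⟩

lemma exists_injectivePresentation_annihilatorsIn_idealsMeeting [IsNoetherianRing R]
    (S : Submonoid R) (X : ModuleCat R) (hX : annihilatorsIn S.idealsMeeting X) :
    ∃ ip : InjectivePresentation X, annihilatorsIn S.idealsMeeting ip.J := by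
  have := Module.injective_module_of_injective_object R ↥(Injective.under X)
    (inj := Injective.injective_under X)
  have := Module.Injective.torsion' (E := ↥(Injective.under X)) S
  let ι : X →ₗ[R] Submodule.torsion' R ↥(Injective.under X) S :=
    LinearMap.codRestrict _ (Injective.ι X).hom fun x => by
      obtain ⟨s, hs, hsx⟩ := hX x
      refine ⟨⟨s, hs⟩, ?_⟩
      rw [Submonoid.mk_smul, ← map_smul, (Ideal.mem_torsionOf_iff x s).mp hsx, map_zero]
  refine ⟨⟨of R (Submodule.torsion' R ↥(Injective.under X) S),
    Module.injective_object_of_injective_module R _, ofHom ι,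
    (mono_iff_injective _).mpr ?_⟩, ?_⟩
  · exact fun x y hxy => (mono_iff_injective (Injective.ι X)).mp inferInstance
      (congrArg Subtype.val hxy)
  · rintro ⟨x, ⟨s, hs⟩, hsx⟩
    exact ⟨s, hs, (Ideal.mem_torsionOf_iff _ s).mpr (Subtype.ext hsx)⟩

end ModuleCat

open ModuleCat

section PairLocalCohomology

variable {R : Type} [CommRing R] (I J : Ideal R)

lemma annihilatorsIn_pairGamma_obj {Q : UpperSet (Ideal R)} {X : ModuleCat R}
    (hX : annihilatorsIn Q X) : annihilatorsIn Q ((pairGamma I J).obj X) :=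
  fun (x : pairTorsion I J X) =>
    Ideal.torsionOf_apply_eq_of_injective (pairTorsion I J X).injective_subtype x ▸ hX x

lemma annihilatorsIn_upperPairWtilde_pairGamma_obj (X : ModuleCat R) :
    annihilatorsIn (upperPairWtilde I J) ((pairGamma I J).obj X) := by
  intro (x : pairTorsion I J X)
  obtain ⟨n, hn⟩ := x.2
  show Ideal.torsionOf R (pairTorsion I J X) x ∈ pairWtilde I J
  rw [← Ideal.torsionOf_apply_eq_of_injective (pairTorsion I J X).injective_subtype x]
  refine ⟨n + 1, Nat.le_add_left 1 n, (Ideal.pow_le_pow_right n.le_succ).trans ?_⟩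
  rwa [add_comm]

lemma annihilatorsIn_upperPairWtilde_pairLocalCohomology_obj (X : ModuleCat R) (i : ℕ) :
    annihilatorsIn (upperPairWtilde I J) ((pairLocalCohomology I J i).obj X) :=
  (annihilatorsIn _).prop_rightDerived_obj (pairGamma I J) (InjectiveResolution.of X)
    (fun _ => annihilatorsIn_upperPairWtilde_pairGamma_obj I J _) i

lemma annihilatorsIn_idealsMeeting_pairLocalCohomology_obj [IsNoetherianRing R]
    (S : Submonoid R) {X : ModuleCat R} (hX : annihilatorsIn S.idealsMeeting X) (i : ℕ) :
    annihilatorsIn S.idealsMeeting ((pairLocalCohomology I J i).obj X) := by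
  obtain ⟨E, hE⟩ := ObjectProperty.exists_injectiveResolution
    (exists_injectivePresentation_annihilatorsIn_idealsMeeting S) hX
  exact (annihilatorsIn _).prop_rightDerived_obj (pairGamma I J) E
    (fun n => annihilatorsIn_pairGamma_obj I J (hE n)) i

end PairLocalCohomology

/-- **Lemma 6(ii).** For any `R`-module `M` and `i ≥ 0`,
`Supp(H^i_{I,J}(M)) ⊆ Supp(M) ∩ W(I,J)`. -/
theorem supp_pair_local_cohomology_subset
    (R : Type) [CommRing R] [IsNoetherianRing R] (I J : Ideal R)
    (M : Type) [AddCommGroup M] [Module R M] (i : ℕ) :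
    Module.support R ((pairLocalCohomology I J i).obj (ModuleCat.of R M)) ⊆
      Module.support R M ∩ {p : PrimeSpectrum R | p.asIdeal ∈ pairW I J} := by
  intro p hp
  refine ⟨?_, p.isPrime, ?_⟩
  · by_contra hM
    have hMtorsion := annihilatorsIn_primeCompl_of_notMem_support (X := of R M) hM
    obtain ⟨s, hs, hsp⟩ := mem_of_mem_support
      (annihilatorsIn_idealsMeeting_pairLocalCohomology_obj I J _ hMtorsion i) hp
    exact hs hsp
  · exact mem_of_mem_support (annihilatorsIn_upperPairWtilde_pairLocalCohomology_obj I J _ i) hp
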